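/- Let y ∈ 𝒴 and i ∈ {1,…,r}, and let y' be the vector agreeing with y in every block except block i, where y'^(i) is the unique minimizer over z ∈ B(F_i) of ⟨∇_i g(y), z − y^(i)⟩ + ‖z − y^(i)‖². Let y* be an optimal solution of (Prox-DSM) closest to y. Then ‖y' − y*‖² ≤ ‖y − y*‖² + ⟨∇_i g(y), (y*)^(i) − y^(i)⟩ − ( g(y') − g(y) ). -/

import Mathlib

open scoped RealInnerProductSpace Pointwise

noncomputable section

/-- A set function on the ground set `V = {1,…,n}` (modeled as `Fin n`) is submodular if
`F(A ∩ B) + F(A ∪ B) ≤ F(A) + F(B)` for all `A, B ⊆ V`. -/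
def Submodular {n : ℕ} (F : Finset (Fin n) → ℝ) : Prop :=
  ∀ A B : Finset (Fin n), F (A ∩ B) + F (A ∪ B) ≤ F A + F B

/-- The base polytope `B(F) = {w ∈ ℝⁿ | ∀ A ⊆ V, w(A) ≤ F(A), and w(V) = F(V)}`. -/
def basePolytope (n : ℕ) (F : Finset (Fin n) → ℝ) : Set (EuclideanSpace ℝ (Fin n)) :=
  {w | (∀ A : Finset (Fin n), ∑ i ∈ A, w i ≤ F A) ∧ (∑ i, w i = F Finset.univ)}

/-- `ℝ^{nr}` with the Euclidean norm, written in `r` blocks of `n` coordinates. -/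
abbrev Vec (n r : ℕ) := PiLp 2 (fun _ : Fin r => EuclideanSpace ℝ (Fin n))

/-- The feasible set `𝒴 = ∏ᵢ B(Fᵢ)` of (Prox-DSM). -/
def feas (n r : ℕ) (F : Fin r → Finset (Fin n) → ℝ) : Set (Vec n r) :=
  {y | ∀ i, y i ∈ basePolytope n (F i)}

/-- The objective `g(y) = ‖∑ᵢ y⁽ⁱ⁾‖²` of (Prox-DSM). -/
def g (n r : ℕ) (y : Vec n r) : ℝ := ‖∑ i, y i‖ ^ 2

/-- The `i`-th block of the gradient of `g`: `∇ᵢ g(y) = 2 ∑ⱼ y⁽ʲ⁾` (the same for every `i`). -/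
def gradBlock (n r : ℕ) (y : Vec n r) : EuclideanSpace ℝ (Fin n) := (2 : ℝ) • ∑ j, y j

/-- The full gradient `∇g(y) ∈ ℝ^{nr}`, whose every block equals `2 ∑ⱼ y⁽ʲ⁾`. -/
def gradg (n r : ℕ) (y : Vec n r) : Vec n r := WithLp.toLp 2 (fun _ => gradBlock n r y)

/-- `y` is an optimal solution of (Prox-DSM). -/
def IsOptimal (n r : ℕ) (F : Fin r → Finset (Fin n) → ℝ) (y : Vec n r) : Prop :=
  y ∈ feas n r F ∧ ∀ z ∈ feas n r F, g n r y ≤ g n r z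

/-- The linear map `S = (1/√r)[Iₙ Iₙ ⋯ Iₙ]`, i.e. `S y = (1/√r) ∑ᵢ y⁽ⁱ⁾`. -/
def Smap (n r : ℕ) (y : Vec n r) : EuclideanSpace ℝ (Fin n) := (Real.sqrt r)⁻¹ • ∑ i, y i

/-- Distance between two sets: `d(K₁, K₂) = inf{‖k₁ - k₂‖ : k₁ ∈ K₁, k₂ ∈ K₂}`. -/
def setDist {E : Type*} [PseudoMetricSpace E] (A B : Set E) : ℝ :=
  sInf ((fun p : E × E => dist p.1 p.2) '' (A ×ˢ B))

/-!
The update of block `i` is a projected-gradient step onto the convex set `B(Fᵢ)`, so it satisfies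
the three-point inequality of the proximal step against every point of `B(Fᵢ)`, in particular
against `(y*)⁽ⁱ⁾`. Since `y'` differs from `y` only in block `i`, the squared distance to `y*`
changes only through that block, and, `g` being quadratic, `g(y') - g(y)` is exactly the
linearization `⟪∇ᵢ g(y), y'⁽ⁱ⁾ - y⁽ⁱ⁾⟫` plus `‖y'⁽ⁱ⁾ - y⁽ⁱ⁾‖²`.
-/

theorem sum_sub_sum_eq_of_forall_ne {ι M : Type*} [Fintype ι] [AddCommGroup M]
    {f f' : ι → M} {i : ι} (h : ∀ j, j ≠ i → f' j = f j) :
    ∑ j, f' j - ∑ j, f j = f' i - f i := by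
  rw [← Finset.sum_sub_distrib]
  exact Fintype.sum_eq_single i fun j hj => by rw [h j hj, sub_self]

theorem sum_smul_add_smul_apply {n : ℕ} (A : Finset (Fin n)) (a b : ℝ)
    (u v : EuclideanSpace ℝ (Fin n)) :
    ∑ j ∈ A, (a • u + b • v) j = a * ∑ j ∈ A, u j + b * ∑ j ∈ A, v j := by
  simp only [PiLp.add_apply, PiLp.smul_apply, smul_eq_mul, Finset.sum_add_distrib,
    Finset.mul_sum]

theorem convex_basePolytope (n : ℕ) (F : Finset (Fin n) → ℝ) :
    Convex ℝ (basePolytope n F) := by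
  intro u hu v hv a b ha hb hab
  refine ⟨fun A => ?_, ?_⟩
  · calc ∑ j ∈ A, (a • u + b • v) j = a * ∑ j ∈ A, u j + b * ∑ j ∈ A, v j :=
          sum_smul_add_smul_apply A a b u v
      _ ≤ a * F A + b * F A :=
          add_le_add (mul_le_mul_of_nonneg_left (hu.1 A) ha)
            (mul_le_mul_of_nonneg_left (hv.1 A) hb)
      _ = F A := by rw [← add_mul, hab, one_mul]
  · rw [sum_smul_add_smul_apply, hu.2, hv.2, ← add_mul, hab, one_mul]

section ProxStep

variable {E : Type*} [NormedAddCommGroup E] [InnerProductSpace ℝ E]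

theorem inner_sub_add_norm_sub_sq_eq (G x z : E) :
    ⟪G, z - x⟫ + ‖z - x‖ ^ 2 = ‖(x - (1 / 2 : ℝ) • G) - z‖ ^ 2 - ‖(1 / 2 : ℝ) • G‖ ^ 2 := by
  have : x - (1 / 2 : ℝ) • G - z = -((z - x) + (1 / 2 : ℝ) • G) := by abel
  rw [this, norm_neg, norm_add_sq_real, real_inner_smul_right, real_inner_comm]
  ring

/-- Minimizing `⟪G, z - x⟫ + ‖z - x‖²` over `C` is projecting `x - G/2` onto `C`, so this is the
variational characterization of the projection. -/
theorem inner_add_two_smul_sub_nonneg_of_isMinOn {C : Set E} (hC : Convex ℝ C)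
    {G x p : E} (hp : p ∈ C)
    (hmin : IsMinOn (fun z => ⟪G, z - x⟫ + ‖z - x‖ ^ 2) C p)
    {w : E} (hw : w ∈ C) :
    0 ≤ ⟪G + (2 : ℝ) • (p - x), w - p⟫ := by
  set u := x - (1 / 2 : ℝ) • G
  have hdist : ‖u - p‖ = ⨅ z : C, ‖u - z‖ := by
    have : Nonempty C := ⟨⟨p, hp⟩⟩
    refine le_antisymm (le_ciInf fun z => ?_)
      (ciInf_le (f := fun z : C => ‖u - z‖) ⟨0, ?_⟩ ⟨p, hp⟩)
    · have := isMinOn_iff.mp hmin z z.2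
      rw [inner_sub_add_norm_sub_sq_eq, inner_sub_add_norm_sub_sq_eq] at this
      exact pow_le_pow_iff_left₀ (norm_nonneg _) (norm_nonneg _) two_ne_zero |>.mp
        (by linarith)
    · rintro _ ⟨z, rfl⟩; exact norm_nonneg _
  have := (norm_eq_iInf_iff_real_inner_le_zero hC hp).mp hdist w hw
  have hu : u - p = -((1 / 2 : ℝ) • (G + (2 : ℝ) • (p - x))) := by
    simp only [u, smul_add, smul_smul]; norm_num; abel
  rw [hu, inner_neg_left, real_inner_smul_left] at this
  linarith

theorem norm_sub_sq_le_of_isMinOn {C : Set E} (hC : Convex ℝ C)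
    {G x p : E} (hp : p ∈ C)
    (hmin : IsMinOn (fun z => ⟪G, z - x⟫ + ‖z - x‖ ^ 2) C p)
    {w : E} (hw : w ∈ C) :
    ‖p - w‖ ^ 2 ≤ ‖x - w‖ ^ 2 + ⟪G, w - x⟫ - (⟪G, p - x⟫ + ‖p - x‖ ^ 2) := by
  have hopt := inner_add_two_smul_sub_nonneg_of_isMinOn hC hp hmin hw
  obtain ⟨d, rfl⟩ : ∃ d, p = x + d := ⟨p - x, by abel⟩
  obtain ⟨a, rfl⟩ : ∃ a, w = x + a := ⟨w - x, by abel⟩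
  simp only [add_sub_add_left_eq_sub, add_sub_cancel_left, sub_add_cancel_left, norm_neg]
    at hopt ⊢
  rw [inner_add_left, real_inner_smul_left, inner_sub_right, inner_sub_right,
    real_inner_self_eq_norm_sq] at hopt
  rw [norm_sub_sq_real]
  linarith

end ProxStep

theorem PiLp.norm_sub_sq_sub_norm_sub_sq_of_forall_ne {ι : Type*} [Fintype ι]
    {β : ι → Type*} [∀ i, SeminormedAddCommGroup (β i)] {x x' : PiLp 2 β} {i : ι}
    (h : ∀ j, j ≠ i → x' j = x j) (w : PiLp 2 β) :
    ‖x' - w‖ ^ 2 - ‖x - w‖ ^ 2 = ‖x' i - w i‖ ^ 2 - ‖x i - w i‖ ^ 2 := by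
  rw [PiLp.norm_sq_eq_of_L2, PiLp.norm_sq_eq_of_L2]
  exact sum_sub_sum_eq_of_forall_ne fun j hj => by rw [PiLp.sub_apply, PiLp.sub_apply, h j hj]

theorem g_sub_g_of_forall_ne {n r : ℕ} {y y' : Vec n r} {i : Fin r}
    (h : ∀ j, j ≠ i → y' j = y j) :
    g n r y' - g n r y = ⟪gradBlock n r y, y' i - y i⟫ + ‖y' i - y i‖ ^ 2 := by
  have hsum : ∑ j, y' j = ∑ j, y j + (y' i - y i) :=
    eq_add_of_sub_eq' (sum_sub_sum_eq_of_forall_ne h)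
  rw [g, g, gradBlock, hsum, norm_add_sq_real, real_inner_smul_left]
  ring

theorem statement5_general (n r : ℕ)
    (F : Fin r → Finset (Fin n) → ℝ)
    (y y' ystar : Vec n r) (i : Fin r)
    (hagree : ∀ j, j ≠ i → y' j = y j)
    (hmem : y' i ∈ basePolytope n (F i))
    (hmin : ∀ z ∈ basePolytope n (F i),
      ⟪gradBlock n r y, y' i - y i⟫ + ‖y' i - y i‖ ^ 2
        ≤ ⟪gradBlock n r y, z - y i⟫ + ‖z - y i‖ ^ 2)
    (hopt : IsOptimal n r F ystar) :
    ‖y' - ystar‖ ^ 2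
      ≤ ‖y - ystar‖ ^ 2 + ⟪gradBlock n r y, ystar i - y i⟫ - (g n r y' - g n r y) := by
  have hblock := norm_sub_sq_le_of_isMinOn (convex_basePolytope n (F i)) hmem
    (isMinOn_iff.mpr hmin) (hopt.1 i)
  have hsplit := PiLp.norm_sub_sq_sub_norm_sub_sq_of_forall_ne hagree ystar
  rw [g_sub_g_of_forall_ne hagree]
  linarith

/-- One step of block coordinate descent: if `y'` agrees with `y`
outside block `i` and `y'⁽ⁱ⁾` minimizes `⟨∇ᵢ g(y), z - y⁽ⁱ⁾⟩ + ‖z - y⁽ⁱ⁾‖²` over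
`z ∈ B(Fᵢ)`, and `y*` is an optimal solution of (Prox-DSM) closest to `y`, then
`‖y' - y*‖² ≤ ‖y - y*‖² + ⟨∇ᵢ g(y), (y*)⁽ⁱ⁾ - y⁽ⁱ⁾⟩ - (g(y') - g(y))`. -/
theorem statement5 (n r : ℕ) (hn : 1 ≤ n) (hr : 1 ≤ r)
    (F : Fin r → Finset (Fin n) → ℝ)
    (hsub : ∀ i, Submodular (F i)) (hnorm : ∀ i, F i ∅ = 0)
    (y y' ystar : Vec n r) (i : Fin r)
    (hy : y ∈ feas n r F)
    (hagree : ∀ j, j ≠ i → y' j = y j)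
    (hmem : y' i ∈ basePolytope n (F i))
    (hmin : ∀ z ∈ basePolytope n (F i),
      ⟪gradBlock n r y, y' i - y i⟫ + ‖y' i - y i‖ ^ 2
        ≤ ⟪gradBlock n r y, z - y i⟫ + ‖z - y i‖ ^ 2)
    (hopt : IsOptimal n r F ystar)
    (hclosest : ∀ z : Vec n r, IsOptimal n r F z → ‖y - ystar‖ ≤ ‖y - z‖) :
    ‖y' - ystar‖ ^ 2
      ≤ ‖y - ystar‖ ^ 2 + ⟪gradBlock n r y, ystar i - y i⟫ - (g n r y' - g n r y) :=
  statement5_general n r F y y' ystar i hagree hmem hmin hopt
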